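/- If a randomized 1-selection mechanism with predictions is impartial, α-consistent, and β-robust on plurality graphs, then β ≤ 3/4 and α + β ≤ 3/2. -/

import Mathlib

/-- `E` has no self-loops. -/
def NoLoops {n : ℕ} (E : Finset (Fin n × Fin n)) : Prop := ∀ i, (i, i) ∉ E

/-- The indegree of vertex `i` in the graph with edge set `E`. -/
def indeg {n : ℕ} (E : Finset (Fin n × Fin n)) (i : Fin n) : ℕ :=
  (E.filter (fun e => e.2 = i)).card

/-- `Δ(G)`: the maximum indegree of a vertex. -/
def maxIndeg {n : ℕ} (E : Finset (Fin n × Fin n)) : ℕ :=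
  Finset.univ.sup (indeg E)

/-- A plurality graph: every vertex has outdegree exactly one. -/
def Plurality {n : ℕ} (E : Finset (Fin n × Fin n)) : Prop :=
  ∀ i, (E.filter (fun e => e.1 = i)).card = 1

/-- A (randomized) 1-selection mechanism with predictions: for each `n`, given a predicted
vertex and a graph, it assigns a selection probability to each vertex. -/
abbrev Mech1 : Type :=
  ∀ n : ℕ, Fin n → Finset (Fin n × Fin n) → Fin n → ℝ

/-- The probabilities lie in `[0,1]` and sum to at most 1 on every valid input. -/
def ValidMech1 (f : Mech1) : Prop :=
  ∀ (n : ℕ) (ih : Fin n) (E : Finset (Fin n × Fin n)), NoLoops E →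
    (∀ i, 0 ≤ f n ih E i ∧ f n ih E i ≤ 1) ∧ (∑ i, f n ih E i) ≤ 1

/-- Impartiality: the probability of selecting `i` does not depend on `i`'s outgoing edges. -/
def Impartial1 (f : Mech1) : Prop :=
  ∀ (n : ℕ) (ih : Fin n) (E E' : Finset (Fin n × Fin n)) (i : Fin n),
    NoLoops E → NoLoops E' →
    E.filter (fun e => e.1 ≠ i) = E'.filter (fun e => e.1 ≠ i) →
    f n ih E i = f n ih E' i

/-- `α`-consistency on plurality graphs. -/
def ConsistentPl (α : ℝ) (f : Mech1) : Prop :=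
  ∀ (n : ℕ) (ih : Fin n) (E : Finset (Fin n × Fin n)),
    NoLoops E → Plurality E → indeg E ih = maxIndeg E →
    α * (maxIndeg E : ℝ) ≤ ∑ i, f n ih E i * (indeg E i : ℝ)

/-- `β`-robustness on plurality graphs. -/
def RobustPl (β : ℝ) (f : Mech1) : Prop :=
  ∀ (n : ℕ) (ih : Fin n) (E : Finset (Fin n × Fin n)), NoLoops E → Plurality E →
    β * (maxIndeg E : ℝ) ≤ ∑ i, f n ih E i * (indeg E i : ℝ)

/-! Four voters: `0` and `1` vote for each other, `2` votes for `1` and `3` for `0`, so `0` and `1`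
tie with two votes each. If `1` moves its vote to `2`, vertex `1` becomes the unique winner, and
robustness forces `f(1) ≥ 2β - 1`; if instead `0` moves its vote to `2`, vertex `0` becomes the
unique winner, and consistency with prediction `0` forces `f(0) ≥ 2α - 1`. By impartiality neither
move changes the mover's own probability, so both bounds hold simultaneously in the tie graph,
where the probabilities sum to at most one: `2α - 1 + 2β - 1 ≤ 1`. Robustness implies consistency
with the same constant, which gives `β ≤ 3/4`. -/

theorem RobustPl.consistentPl {β : ℝ} {f : Mech1} (h : RobustPl β f) : ConsistentPl β f :=
  fun n ih E hE hpl _ => h n ih E hE hpl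

theorem sum_mul_le_mul_add_one {ι : Type*} [Fintype ι] [DecidableEq ι] {p d : ι → ℝ} {v : ι}
    (hp : ∀ i, 0 ≤ p i) (hsum : ∑ i, p i ≤ 1) (hd : ∀ i ≠ v, d i ≤ 1) :
    ∑ i, p i * d i ≤ (d v - 1) * p v + 1 := by
  calc ∑ i, p i * d i ≤ ∑ i, (p i + if i = v then (d v - 1) * p i else 0) := by
        refine Finset.sum_le_sum fun i _ => ?_
        split_ifs with hi
        · subst hi; linarith
        · nlinarith [hp i, hd i hi]
    _ = ∑ i, p i + (d v - 1) * p v := by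
        rw [Finset.sum_add_distrib, Finset.sum_ite_eq']; simp
    _ ≤ (d v - 1) * p v + 1 := by linarith

theorem indeg_le_maxIndeg {n : ℕ} (E : Finset (Fin n × Fin n)) (i : Fin n) :
    indeg E i ≤ maxIndeg E :=
  Finset.le_sup (Finset.mem_univ i)

theorem mul_maxIndeg_sub_one_le_of_indeg_le_one {f : Mech1} (hvalid : ValidMech1 f) {n : ℕ}
    {ih : Fin n} {E : Finset (Fin n × Fin n)} (hE : NoLoops E) {v : Fin n}
    (hv : ∀ i ≠ v, indeg E i ≤ 1)
    {γ : ℝ} (hγ : γ * (maxIndeg E : ℝ) ≤ ∑ i, f n ih E i * (indeg E i : ℝ)) :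
    γ * maxIndeg E - 1 ≤ (maxIndeg E - 1) * f n ih E v := by
  obtain ⟨hp, hsum⟩ := hvalid n ih E hE
  have hd : ((indeg E v : ℝ) - 1) * f n ih E v ≤ (maxIndeg E - 1) * f n ih E v :=
    mul_le_mul_of_nonneg_right (by gcongr; exact indeg_le_maxIndeg E v) (hp v).1
  have := sum_mul_le_mul_add_one (fun i => (hp i).1) hsum (d := fun i => (indeg E i : ℝ))
    fun i hi => by exact_mod_cast hv i hi
  linarith

def redirect {n : ℕ} (E : Finset (Fin n × Fin n)) (i j : Fin n) : Finset (Fin n × Fin n) :=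
  insert (i, j) (E.filter fun e => e.1 ≠ i)

theorem NoLoops.redirect {n : ℕ} {E : Finset (Fin n × Fin n)} (hE : NoLoops E) {i j : Fin n}
    (hij : i ≠ j) : NoLoops (redirect E i j) := by
  intro k hk
  rcases Finset.mem_insert.1 hk with h | h
  · obtain ⟨rfl, rfl⟩ := Prod.ext_iff.1 h
    exact hij rfl
  · exact hE k (Finset.mem_filter.1 h).1

theorem filter_redirect {n : ℕ} (E : Finset (Fin n × Fin n)) (i j : Fin n) :
    (redirect E i j).filter (fun e => e.1 ≠ i) = E.filter fun e => e.1 ≠ i := by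
  ext e
  simp only [redirect, Finset.mem_filter, Finset.mem_insert]
  constructor
  · rintro ⟨rfl | h, hne⟩
    · exact absurd rfl hne
    · exact h
  · exact fun h => ⟨Or.inr h, h.2⟩

theorem Impartial1.apply_redirect {f : Mech1} (himp : Impartial1 f) {n : ℕ} (ih : Fin n)
    {E : Finset (Fin n × Fin n)} (hE : NoLoops E) {i j : Fin n} (hij : i ≠ j) :
    f n ih (redirect E i j) i = f n ih E i :=
  himp n ih _ _ i (hE.redirect hij) hE (filter_redirect E i j)

def tieGraph : Finset (Fin 4 × Fin 4) := {(0, 1), (1, 0), (2, 1), (3, 0)}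

theorem noLoops_tieGraph : NoLoops tieGraph := by unfold NoLoops; decide

theorem ConsistentPl.add_le_three_halves {α β : ℝ} {f : Mech1} (hvalid : ValidMech1 f)
    (himp : Impartial1 f) (hcons : ConsistentPl α f) (hrob : RobustPl β f) :
    α + β ≤ 3 / 2 := by
  have hE₀ := noLoops_tieGraph.redirect (show (0 : Fin 4) ≠ 2 by decide)
  have hE₁ := noLoops_tieGraph.redirect (show (1 : Fin 4) ≠ 2 by decide)
  have hmax₀ : maxIndeg (redirect tieGraph 0 2) = 2 := by decide
  have hmax₁ : maxIndeg (redirect tieGraph 1 2) = 2 := by decide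
  have h₀ := mul_maxIndeg_sub_one_le_of_indeg_le_one hvalid hE₀ (v := 0) (by decide) <|
    hcons 4 0 _ hE₀ (by unfold Plurality; decide) (by decide)
  have h₁ := mul_maxIndeg_sub_one_le_of_indeg_le_one hvalid hE₁ (v := 1) (by decide) <|
    hrob 4 0 _ hE₁ (by unfold Plurality; decide)
  rw [hmax₀, himp.apply_redirect 0 noLoops_tieGraph (by decide)] at h₀
  rw [hmax₁, himp.apply_redirect 0 noLoops_tieGraph (by decide)] at h₁
  obtain ⟨hp, hsum⟩ := hvalid 4 0 tieGraph noLoops_tieGraph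
  rw [Fin.sum_univ_four] at hsum
  push_cast at h₀ h₁
  linarith [(hp 2).1, (hp 3).1]

theorem upper_bound_one_selection_plurality (α β : ℝ) (f : Mech1)
    (hvalid : ValidMech1 f) (himp : Impartial1 f)
    (hcons : ConsistentPl α f) (hrob : RobustPl β f) :
    β ≤ 3 / 4 ∧ α + β ≤ 3 / 2 := by
  have hβ := hrob.consistentPl.add_le_three_halves hvalid himp hrob
  exact ⟨by linarith, hcons.add_le_three_halves hvalid himp hrob⟩
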